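/- Let k ≥ 2 and let Ω = {(z₁,…,z_{3k}) ∈ ℂ^{3k} : z₂ + i·z_{2k} ≠ 0}. Define Θ : Ω → ℂ^{3k} by Θ(z₁,…,z_{3k}) = (z₁,…,z_{2k}, z_{2k+1}·(z₂+i·z_{2k}), z_{2k+2},…,z_{3k}). Then Θ is a biholomorphism of Ω onto itself (holomorphic bijection of Ω onto Ω with holomorphic inverse), ℳ¹ ⊆ Ω, and Θ(ℳ¹) = ℳ². -/
import Mathlib


noncomputable section

abbrev CN (k : ℕ) : Type := Fin (3 * k) → ℂ

/-- The coordinate `z_{m+1}` (0-based index `m`) of a point of `ℂ^{3k}`. -/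
def coordOf (k : ℕ) (z : CN k) (m : ℕ) : ℂ := if h : m < 3 * k then z ⟨m, h⟩ else 0

/-- The condition `(z₁, x₂, …, x_{2k}) ∈ S`, where
`S = {|z₁|² + x₃² + ⋯ + x_{2k-1}² + (√(x₂² + x_{2k}²) − 1)² ≤ 1/4}`. -/
def inS (k : ℕ) (Z : CN k) : Prop :=
  ‖coordOf k Z 0‖ ^ 2 + (∑ j ∈ Finset.Icc 3 (2 * k - 1), (coordOf k Z (j - 1)).re ^ 2) +
    (Real.sqrt ((coordOf k Z 1).re ^ 2 + (coordOf k Z (2 * k - 1)).re ^ 2) - 1) ^ 2 ≤ 1 / 4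

/-- The common defining conditions of `ℳ¹` and `ℳ²` apart from the `z_{2k+1}`
coordinate: `(z₁, x₂, …, x_{2k}) ∈ S`; `y_j = 0` for `2 ≤ j ≤ 2k`;
`z_{2k+2} = |z₁|² + conj(z₁)(√(x₂²+x_{2k}²) − 1) + i·conj(z₁)·x₃`; and
`z_ℓ = conj(z₁)(x_{2(ℓ−2k−1)} + i x_{2(ℓ−2k−1)+1})` for `2k+3 ≤ ℓ ≤ 3k`. -/
def McondCommon (k : ℕ) (Z : CN k) : Prop :=
  inS k Z ∧
  (∀ j : ℕ, 2 ≤ j → j ≤ 2 * k → (coordOf k Z (j - 1)).im = 0) ∧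
  coordOf k Z (2 * k + 1) =
    ((‖coordOf k Z 0‖ ^ 2 : ℝ) : ℂ) +
      starRingEnd ℂ (coordOf k Z 0) *
        (((Real.sqrt ((coordOf k Z 1).re ^ 2 + (coordOf k Z (2 * k - 1)).re ^ 2) - 1 : ℝ) : ℂ) +
          Complex.I * (((coordOf k Z 2).re : ℝ) : ℂ)) ∧
  (∀ l : ℕ, 2 * k + 3 ≤ l → l ≤ 3 * k →
    coordOf k Z (l - 1) =
      starRingEnd ℂ (coordOf k Z 0) *
        ((((coordOf k Z (2 * (l - 2 * k - 1) - 1)).re : ℝ) : ℂ) +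
          Complex.I * (((coordOf k Z (2 * (l - 2 * k - 1))).re : ℝ) : ℂ)))

/-- The model tube `ℳ¹ ⊆ ℂ^{3k}` (with `z_{2k+1} = conj(z₁)²`). -/
def M1set (k : ℕ) : Set (CN k) :=
  {Z | McondCommon k Z ∧ coordOf k Z (2 * k) = (starRingEnd ℂ (coordOf k Z 0)) ^ 2}

/-- The model tube `ℳ² ⊆ ℂ^{3k}` (with `z_{2k+1} = conj(z₁)²·(x₂ + i x_{2k})`). -/
def M2set (k : ℕ) : Set (CN k) :=
  {Z | McondCommon k Z ∧
    coordOf k Z (2 * k) =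
      (starRingEnd ℂ (coordOf k Z 0)) ^ 2 *
        ((((coordOf k Z 1).re : ℝ) : ℂ) + Complex.I * (((coordOf k Z (2 * k - 1)).re : ℝ) : ℂ))}

/-- The domain `Ω = {z ∈ ℂ^{3k} : z₂ + i·z_{2k} ≠ 0}`. -/
def Omg (k : ℕ) : Set (CN k) :=
  {z | coordOf k z 1 + Complex.I * coordOf k z (2 * k - 1) ≠ 0}

/-- The map `Θ : Ω → ℂ^{3k}` multiplying the `z_{2k+1}` coordinate by
`z₂ + i·z_{2k}` and leaving all other coordinates unchanged. -/
def Theta (k : ℕ) (z : CN k) : CN k := fun j =>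
  if (j : ℕ) = 2 * k then
    z j * (coordOf k z 1 + Complex.I * coordOf k z (2 * k - 1))
  else z j

section Helpers

variable {k : ℕ}

/-- The multiplier `z₂ + i z_{2k}`. -/
def wfun (k : ℕ) (z : CN k) : ℂ :=
  coordOf k z 1 + Complex.I * coordOf k z (2 * k - 1)

/-- The inverse map of `Θ`. -/
def Thinv (k : ℕ) (z : CN k) : CN k := fun j =>
  if (j : ℕ) = 2 * k then z j / wfun k z else z j

lemma coordOf_lt {m : ℕ} (h : m < 3 * k) (z : CN k) : coordOf k z m = z ⟨m, h⟩ := dif_pos h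

lemma mem_Omg_iff (z : CN k) : z ∈ Omg k ↔ wfun k z ≠ 0 := Iff.rfl

lemma coord_Theta_ne (z : CN k) {m : ℕ} (hm : m ≠ 2 * k) :
    coordOf k (Theta k z) m = coordOf k z m := by
  by_cases h : m < 3 * k
  · rw [coordOf_lt h, coordOf_lt h]
    simp only [Theta]
    rw [if_neg (by simpa using hm)]
  · simp [coordOf, h]

lemma coord_Theta_2k (hk : 2 ≤ k) (z : CN k) :
    coordOf k (Theta k z) (2 * k) = coordOf k z (2 * k) * wfun k z := by
  have h : 2 * k < 3 * k := by omega
  rw [coordOf_lt h, coordOf_lt h]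
  simp only [Theta, wfun]
  rw [if_pos (by simp)]

lemma coord_Thinv_ne (z : CN k) {m : ℕ} (hm : m ≠ 2 * k) :
    coordOf k (Thinv k z) m = coordOf k z m := by
  by_cases h : m < 3 * k
  · rw [coordOf_lt h, coordOf_lt h]
    simp only [Thinv]
    rw [if_neg (by simpa using hm)]
  · simp [coordOf, h]

lemma coord_Thinv_2k (hk : 2 ≤ k) (z : CN k) :
    coordOf k (Thinv k z) (2 * k) = coordOf k z (2 * k) / wfun k z := by
  have h : 2 * k < 3 * k := by omega
  rw [coordOf_lt h, coordOf_lt h]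
  simp only [Thinv]
  rw [if_pos (by simp)]

lemma wfun_Theta (hk : 2 ≤ k) (z : CN k) : wfun k (Theta k z) = wfun k z := by
  unfold wfun
  rw [coord_Theta_ne z (show (1 : ℕ) ≠ 2 * k by omega),
    coord_Theta_ne z (show 2 * k - 1 ≠ 2 * k by omega)]

lemma wfun_Thinv (hk : 2 ≤ k) (z : CN k) : wfun k (Thinv k z) = wfun k z := by
  unfold wfun
  rw [coord_Thinv_ne z (show (1 : ℕ) ≠ 2 * k by omega),
    coord_Thinv_ne z (show 2 * k - 1 ≠ 2 * k by omega)]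

lemma thinv_theta (hk : 2 ≤ k) {z : CN k} (hz : z ∈ Omg k) : Thinv k (Theta k z) = z := by
  have hw : wfun k z ≠ 0 := hz
  funext j
  simp only [Thinv, Theta, wfun_Theta hk]
  by_cases hj : (j : ℕ) = 2 * k
  · rw [if_pos hj, if_pos hj, mul_div_assoc,
      show coordOf k z 1 + Complex.I * coordOf k z (2 * k - 1) = wfun k z from rfl,
      div_self hw, mul_one]
  · rw [if_neg hj, if_neg hj]

lemma theta_thinv (hk : 2 ≤ k) {z : CN k} (hz : z ∈ Omg k) : Theta k (Thinv k z) = z := by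
  have hw : wfun k z ≠ 0 := hz
  funext j
  have hwt : coordOf k (Thinv k z) 1 + Complex.I * coordOf k (Thinv k z) (2 * k - 1) =
      wfun k z := wfun_Thinv hk z
  simp only [Theta, Thinv, hwt]
  by_cases hj : (j : ℕ) = 2 * k
  · rw [if_pos hj, if_pos hj, div_mul_cancel₀ _ hw]
  · rw [if_neg hj, if_neg hj]

lemma inS_congr (hk : 2 ≤ k) {z w : CN k}
    (h : ∀ m, m ≠ 2 * k → coordOf k z m = coordOf k w m) (hz : inS k z) : inS k w := by
  unfold inS at hz ⊢
  have hsum : ∑ j ∈ Finset.Icc 3 (2 * k - 1), (coordOf k w (j - 1)).re ^ 2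
      = ∑ j ∈ Finset.Icc 3 (2 * k - 1), (coordOf k z (j - 1)).re ^ 2 :=
    Finset.sum_congr rfl fun j hj => by
      rw [h (j - 1) (by rw [Finset.mem_Icc] at hj; omega)]
  rw [hsum, ← h 0 (by omega), ← h 1 (by omega), ← h (2 * k - 1) (by omega)]
  exact hz

lemma mcond_congr (hk : 2 ≤ k) {z w : CN k}
    (h : ∀ m, m ≠ 2 * k → coordOf k z m = coordOf k w m) (hz : McondCommon k z) :
    McondCommon k w := by
  obtain ⟨hS, hy, h2, hl⟩ := hz
  refine ⟨inS_congr hk h hS, ?_, ?_, ?_⟩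
  · intro j hj1 hj2
    rw [← h (j - 1) (by omega)]
    exact hy j hj1 hj2
  · rw [← h (2 * k + 1) (by omega), ← h 0 (by omega), ← h 1 (by omega),
      ← h (2 * k - 1) (by omega), ← h 2 (by omega)]
    exact h2
  · intro l hl1 hl2
    rw [← h (l - 1) (by omega), ← h 0 (by omega),
      ← h (2 * (l - 2 * k - 1) - 1) (by omega), ← h (2 * (l - 2 * k - 1)) (by omega)]
    exact hl l hl1 hl2

lemma coord_real {z : CN k} {m : ℕ} (him : (coordOf k z m).im = 0) :
    coordOf k z m = (((coordOf k z m).re : ℝ) : ℂ) :=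
  Complex.ext (by simp) (by simp [him])

lemma wfun_real {z : CN k} (h1 : (coordOf k z 1).im = 0)
    (h2 : (coordOf k z (2 * k - 1)).im = 0) :
    wfun k z = (((coordOf k z 1).re : ℝ) : ℂ) +
      Complex.I * (((coordOf k z (2 * k - 1)).re : ℝ) : ℂ) := by
  apply Complex.ext <;> simp [wfun, h1, h2]

lemma mcond_mem_Omg (hk : 2 ≤ k) {z : CN k} (hz : McondCommon k z) : z ∈ Omg k := by
  obtain ⟨hS, hy, -, -⟩ := hz
  have h2 : (coordOf k z 1).im = 0 := by
    have := hy 2 (by omega) (by omega); simpa using this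
  have h2k : (coordOf k z (2 * k - 1)).im = 0 := hy (2 * k) (by omega) (by omega)
  have hab : (coordOf k z 1).re ^ 2 + (coordOf k z (2 * k - 1)).re ^ 2 ≠ 0 := by
    intro hc
    unfold inS at hS
    rw [hc] at hS
    have hsum : 0 ≤ ∑ j ∈ Finset.Icc 3 (2 * k - 1), (coordOf k z (j - 1)).re ^ 2 :=
      Finset.sum_nonneg fun j _ => sq_nonneg _
    have h0 : Real.sqrt 0 = 0 := Real.sqrt_zero
    rw [h0] at hS
    nlinarith [sq_nonneg ‖coordOf k z 0‖]
  rw [mem_Omg_iff, wfun_real h2 h2k]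
  intro h0
  rw [Complex.ext_iff] at h0
  simp only [Complex.add_re, Complex.add_im, Complex.ofReal_re, Complex.ofReal_im,
    Complex.mul_re, Complex.mul_im, Complex.I_re, Complex.I_im, Complex.zero_re,
    Complex.zero_im] at h0
  apply hab
  nlinarith [h0.1, h0.2]

end Helpers

/-- `Θ` is a biholomorphism of `Ω` onto itself (holomorphic
bijection of `Ω` onto `Ω` with holomorphic inverse), `ℳ¹ ⊆ Ω`, and
`Θ(ℳ¹) = ℳ²`. -/
theorem stmt_13 (k : ℕ) (hk : 2 ≤ k) :
    DifferentiableOn ℂ (Theta k) (Omg k) ∧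
    Set.BijOn (Theta k) (Omg k) (Omg k) ∧
    (∃ Θinv : CN k → CN k, DifferentiableOn ℂ Θinv (Omg k) ∧
      (∀ z ∈ Omg k, Θinv (Theta k z) = z) ∧ (∀ z ∈ Omg k, Theta k (Θinv z) = z)) ∧
    M1set k ⊆ Omg k ∧
    Theta k '' M1set k = M2set k := by
  have h1lt : (1 : ℕ) < 3 * k := by omega
  have h2klt : 2 * k - 1 < 3 * k := by omega
  -- differentiability of Theta
  have hD : Differentiable ℂ (Theta k) := by
    rw [differentiable_pi]
    intro j
    have hproj : ∀ i : Fin (3 * k), Differentiable ℂ (fun z : CN k => z i) :=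
      fun i => (ContinuousLinearMap.proj i : CN k →L[ℂ] ℂ).differentiable
    by_cases hj : (j : ℕ) = 2 * k
    · simp only [Theta, hj, if_true, coordOf, dif_pos h1lt, dif_pos h2klt]
      exact (hproj j).mul ((hproj _).add ((differentiable_const _).mul (hproj _)))
    · simp only [Theta, hj, if_false]
      exact hproj j
  -- mapsTo
  have hmaps : ∀ z ∈ Omg k, Theta k z ∈ Omg k := by
    intro z hz
    rw [mem_Omg_iff] at hz ⊢
    rwa [wfun_Theta hk]
  have hmapsInv : ∀ z ∈ Omg k, Thinv k z ∈ Omg k := by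
    intro z hz
    rw [mem_Omg_iff] at hz ⊢
    rwa [wfun_Thinv hk]
  -- differentiability of Thinv on Omg
  have hDinv : DifferentiableOn ℂ (Thinv k) (Omg k) := by
    rw [differentiableOn_pi]
    intro j
    have hproj : ∀ i : Fin (3 * k), DifferentiableOn ℂ (fun z : CN k => z i) (Omg k) :=
      fun i => (ContinuousLinearMap.proj i : CN k →L[ℂ] ℂ).differentiable.differentiableOn
    by_cases hj : (j : ℕ) = 2 * k
    · simp only [Thinv, hj, if_true, wfun, coordOf, dif_pos h1lt, dif_pos h2klt]
      have hden : DifferentiableOn ℂ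
          (fun z : CN k => z ⟨1, h1lt⟩ + Complex.I * z ⟨2 * k - 1, h2klt⟩) (Omg k) :=
        (hproj ⟨1, h1lt⟩).add
          ((differentiableOn_const Complex.I).mul (hproj ⟨2 * k - 1, h2klt⟩))
      have hne : ∀ z ∈ Omg k, z ⟨1, h1lt⟩ + Complex.I * z ⟨2 * k - 1, h2klt⟩ ≠ 0 := by
        intro z hz
        have hw : wfun k z ≠ 0 := hz
        simpa [wfun, coordOf, dif_pos h1lt, dif_pos h2klt] using hw
      simp only [div_eq_mul_inv]
      exact (hproj j).mul (hden.inv hne)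
    · simp only [Thinv, hj, if_false]
      exact hproj j
  -- image equality
  have himg : Theta k '' M1set k = M2set k := by
    ext W
    constructor
    · rintro ⟨Z, ⟨hm, h2k⟩, rfl⟩
      have hcoord : ∀ m, m ≠ 2 * k → coordOf k Z m = coordOf k (Theta k Z) m :=
        fun m hm' => (coord_Theta_ne Z hm').symm
      have hy := hm.2.1
      have hy1 : (coordOf k Z 1).im = 0 := by
        have := hy 2 (by omega) (by omega); simpa using this
      have hy2k : (coordOf k Z (2 * k - 1)).im = 0 := hy (2 * k) (by omega) (by omega)
      refine ⟨mcond_congr hk hcoord hm, ?_⟩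
      rw [coord_Theta_2k hk, coord_Theta_ne Z (show (0 : ℕ) ≠ 2 * k by omega),
        coord_Theta_ne Z (show (1 : ℕ) ≠ 2 * k by omega),
        coord_Theta_ne Z (show 2 * k - 1 ≠ 2 * k by omega), h2k, wfun_real hy1 hy2k]
    · rintro ⟨hm, h2k⟩
      have hW : W ∈ Omg k := mcond_mem_Omg hk hm
      have hw : wfun k W ≠ 0 := hW
      have hy := hm.2.1
      have hy1 : (coordOf k W 1).im = 0 := by
        have := hy 2 (by omega) (by omega); simpa using this
      have hy2k : (coordOf k W (2 * k - 1)).im = 0 := hy (2 * k) (by omega) (by omega)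
      refine ⟨Thinv k W, ⟨?_, ?_⟩, theta_thinv hk hW⟩
      · exact mcond_congr hk (fun m hm' => (coord_Thinv_ne W hm').symm) hm
      · rw [coord_Thinv_2k hk, coord_Thinv_ne W (show (0 : ℕ) ≠ 2 * k by omega), h2k]
        rw [wfun_real hy1 hy2k] at hw ⊢
        rw [mul_div_assoc, div_self hw, mul_one]
  refine ⟨hD.differentiableOn, ⟨hmaps, ?_, ?_⟩, ⟨Thinv k, hDinv,
    fun z hz => thinv_theta hk hz, fun z hz => theta_thinv hk hz⟩,
    fun Z hZ => mcond_mem_Omg hk hZ.1, himg⟩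
  · intro z hz z' hz' heq
    have := congrArg (Thinv k) heq
    rwa [thinv_theta hk hz, thinv_theta hk hz'] at this
  · intro z hz
    exact ⟨Thinv k z, hmapsInv z hz, theta_thinv hk hz⟩
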